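/- Let (E, F) be a resistance form on a set X whose resistance metric R is complete and such that (X,R) is doubling. Then there exists C > 0 such that 𝓡(cl(B_R(x,r)), X∖B_R(x,2r)) ≥ C·r for every x ∈ X and r > 0. -/

import Mathlib

open Filter Set Metric
open scoped ENNReal Topology

/-- A resistance form `(E, F)` on a set `X` (Kigami):
`F` is a linear subspace of the real-valued functions on `X`, `E` is a nonnegative
symmetric bilinear form on `F` such that (RF1) constants belong to `F` and
`E(u,u) = 0` iff `u` is constant, (RF2) the quotient of `F` by the constants is a
Hilbert space under `E` (stated as completeness of the `E`-seminorm on `F`),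
(RF3) points of `X` are separated by `F`, (RF4) for `x ≠ y` the quantity
`R(x,y) = (inf {E(u,u) : u ∈ F, u x = 1, u y = 0})⁻¹` is finite (i.e. the infimum
is positive; an admissible `u` always exists), and (RF5) the Markov property holds
for the unit truncation. -/
structure ResistanceForm (X : Type*) where
  F : Set (X → ℝ)
  E : (X → ℝ) → (X → ℝ) → ℝ
  zero_mem : (0 : X → ℝ) ∈ F
  add_mem : ∀ {u v : X → ℝ}, u ∈ F → v ∈ F → u + v ∈ F
  smul_mem : ∀ (c : ℝ) {u : X → ℝ}, u ∈ F → c • u ∈ F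
  const_mem : ∀ c : ℝ, (fun _ => c) ∈ F
  symm : ∀ u ∈ F, ∀ v ∈ F, E u v = E v u
  add_left : ∀ u ∈ F, ∀ v ∈ F, ∀ w ∈ F, E (u + v) w = E u w + E v w
  smul_left : ∀ (c : ℝ), ∀ u ∈ F, ∀ v ∈ F, E (c • u) v = c * E u v
  nonneg : ∀ u ∈ F, 0 ≤ E u u
  null_iff_const : ∀ u ∈ F, (E u u = 0 ↔ ∃ c : ℝ, ∀ x, u x = c)
  complete : ∀ u : ℕ → (X → ℝ), (∀ n, u n ∈ F) →
    (∀ ε : ℝ, 0 < ε → ∃ N : ℕ, ∀ m ≥ N, ∀ n ≥ N, E (u m - u n) (u m - u n) < ε) →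
    ∃ v ∈ F, ∀ ε : ℝ, 0 < ε → ∃ N : ℕ, ∀ n ≥ N, E (v - u n) (v - u n) < ε
  sep : ∀ x y : X, x ≠ y → ∃ u ∈ F, u x ≠ u y
  exists_unit : ∀ x y : X, x ≠ y → ∃ u ∈ F, u x = 1 ∧ u y = 0
  inf_pos : ∀ x y : X, x ≠ y →
    0 < sInf {e : ℝ | ∃ u ∈ F, u x = 1 ∧ u y = 0 ∧ E u u = e}
  markov : ∀ u ∈ F, (fun x => max 0 (min 1 (u x))) ∈ F ∧
    E (fun x => max 0 (min 1 (u x))) (fun x => max 0 (min 1 (u x))) ≤ E u u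

namespace ResistanceForm

variable {X : Type*}

open Classical in
/-- The resistance metric `R` associated with a resistance form:
`R(x,x) = 0` and `R(x,y) = (inf {E(u,u) : u ∈ F, u x = 1, u y = 0})⁻¹` for `x ≠ y`. -/
noncomputable def rmetric (rf : ResistanceForm X) (x y : X) : ℝ :=
  if x = y then 0
  else (sInf {e : ℝ | ∃ u ∈ rf.F, u x = 1 ∧ u y = 0 ∧ rf.E u u = e})⁻¹

open Classical in
/-- The resistance `𝓡(A,B)` between two sets: the reciprocal of the minimal energy of
functions that are `≡ 1` on `A` and `≡ 0` on `B` if such functions exist, `0` if no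
such function exists, and `∞` if `A` or `B` is empty. -/
noncomputable def setRes (rf : ResistanceForm X) (A B : Set X) : ℝ≥0∞ :=
  if A.Nonempty ∧ B.Nonempty then
    (if ∃ u ∈ rf.F, (∀ x ∈ A, u x = 1) ∧ (∀ x ∈ B, u x = 0) then
      (ENNReal.ofReal
        (sInf {e : ℝ | ∃ u ∈ rf.F, (∀ x ∈ A, u x = 1) ∧ (∀ x ∈ B, u x = 0) ∧ rf.E u u = e}))⁻¹
    else 0)
  else ⊤

end ResistanceForm

/-- A distance function `ρ` on `X` is doubling: there is `N ∈ ℕ` such that every ball of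
radius `2r` is covered by `N` balls of radius `r`. -/
def DoublingOf {X : Type*} (ρ : X → X → ℝ) : Prop :=
  ∃ N : ℕ, ∀ (x : X) (r : ℝ), ∃ s : Finset X, s.card ≤ N ∧
    {y : X | ρ x y < 2 * r} ⊆ ⋃ z ∈ s, {y : X | ρ z y < r}

/-- A distance function `ρ` on `X` is uniformly perfect: there is `γ > 1` such that
`B(x, γ r) \ B(x, r) ≠ ∅` whenever `B(x,r)` is not the whole space. -/
def UniformlyPerfectOf {X : Type*} (ρ : X → X → ℝ) : Prop :=
  ∃ γ : ℝ, 1 < γ ∧ ∀ (x : X) (r : ℝ), 0 < r → {y : X | ρ x y < r} ≠ Set.univ →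
    ({y : X | ρ x y < γ * r} \ {y : X | ρ x y < r}).Nonempty

/-!
A near-minimiser for `R(c, z)` and the Hölder estimate `|u p - u q|² ≤ R(p,q) E(u)` give, when
`d(z,c) ≥ s/2`, a nonnegative function vanishing at `z`, at least `1/2` on `B(c, s/16)`, of energy
at most `4/s`. Summing these over a net of each shell `s_k ≤ d(z,·) < 4 s_k`, `s_k = Λ ρ 4^k`
(doubling bounds the size of the nets), gives shell functions whose energy norms decay
geometrically, so their series converges in the Hilbert space of the form to a potential `V` with
`V z = 0`, `E(V) ≤ 1/(16ρ)` and `V ≥ 1/2` off `B(z, Λρ)`; by Hölder, `V ≤ 1/4` on `B̄(z, ρ)`.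
Truncating `2 - 4V` gives a cutoff of energy `≤ 1/ρ` between `B̄(z, ρ)` and `B(z, Λρ)ᶜ`. Covering
`B(x, 2r)` by boundedly many balls of radius `ρ = r / 2^(Λ+1)` and truncating the sum of their
cutoffs gives a function of energy `≲ 1/r` that is `1` on `B̄(x, r)` and `0` off `B(x, 2r)`.
-/

namespace ResistanceForm

variable {X : Type*} (rf : ResistanceForm X)

lemma sub_mem {u v : X → ℝ} (hu : u ∈ rf.F) (hv : v ∈ rf.F) : u - v ∈ rf.F := by
  simpa [sub_eq_add_neg] using rf.add_mem hu (rf.smul_mem (-1) hv)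

lemma sum_mem {ι : Type*} {s : Finset ι} {f : ι → X → ℝ} (h : ∀ i ∈ s, f i ∈ rf.F) :
    ∑ i ∈ s, f i ∈ rf.F := by
  classical
  induction s using Finset.induction with
  | empty => simpa using rf.zero_mem
  | insert a s ha ih =>
    rw [Finset.sum_insert ha]
    exact rf.add_mem (h a (s.mem_insert_self a)) (ih fun i hi => h i (Finset.mem_insert_of_mem hi))

lemma E_add_right {u v w : X → ℝ} (hu : u ∈ rf.F) (hv : v ∈ rf.F) (hw : w ∈ rf.F) :
    rf.E u (v + w) = rf.E u v + rf.E u w := by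
  rw [rf.symm u hu _ (rf.add_mem hv hw), rf.add_left v hv w hw u hu, rf.symm v hv u hu,
    rf.symm w hw u hu]

lemma E_smul_right (c : ℝ) {u v : X → ℝ} (hu : u ∈ rf.F) (hv : v ∈ rf.F) :
    rf.E u (c • v) = c * rf.E u v := by
  rw [rf.symm u hu _ (rf.smul_mem c hv), rf.smul_left c v hv u hu, rf.symm v hv u hu]

lemma E_add_add {u v : X → ℝ} (hu : u ∈ rf.F) (hv : v ∈ rf.F) :
    rf.E (u + v) (u + v) = rf.E u u + 2 * rf.E u v + rf.E v v := by
  rw [rf.add_left u hu v hv _ (rf.add_mem hu hv), rf.E_add_right hu hu hv,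
    rf.E_add_right hv hu hv, rf.symm v hv u hu]
  ring

lemma E_smul_smul (c : ℝ) {u : X → ℝ} (hu : u ∈ rf.F) :
    rf.E (c • u) (c • u) = c ^ 2 * rf.E u u := by
  rw [rf.smul_left c u hu _ (rf.smul_mem c hu), rf.E_smul_right c hu hu]
  ring

lemma E_sq_le_mul {u v : X → ℝ} (hu : u ∈ rf.F) (hv : v ∈ rf.F) :
    rf.E u v ^ 2 ≤ rf.E u u * rf.E v v := by
  have h := discrim_le_zero (a := rf.E v v) (b := 2 * rf.E u v) (c := rf.E u u) fun t => by
    have := rf.nonneg _ (rf.add_mem hu (rf.smul_mem t hv))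
    rw [rf.E_add_add hu (rf.smul_mem t hv), rf.E_smul_right t hu hv, rf.E_smul_smul t hv] at this
    linarith
  rw [discrim] at h
  linarith

lemma E_const (c : ℝ) : rf.E (fun _ => c) (fun _ => c) = 0 :=
  (rf.null_iff_const _ (rf.const_mem c)).2 ⟨c, fun _ => rfl⟩

lemma E_zero : rf.E 0 0 = 0 := rf.E_const 0

lemma E_const_right {u : X → ℝ} (hu : u ∈ rf.F) (c : ℝ) : rf.E u (fun _ => c) = 0 := by
  have h := rf.E_sq_le_mul hu (rf.const_mem c)
  rw [rf.E_const, mul_zero] at h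
  exact pow_eq_zero_iff (n := 2) two_ne_zero |>.1 (le_antisymm h (sq_nonneg _))

lemma E_add_const {u : X → ℝ} (hu : u ∈ rf.F) (c : ℝ) :
    rf.E (u + fun _ => c) (u + fun _ => c) = rf.E u u := by
  rw [rf.E_add_add hu (rf.const_mem c), rf.E_const_right hu, rf.E_const]
  ring

lemma E_sub_const {u : X → ℝ} (hu : u ∈ rf.F) (c : ℝ) :
    rf.E (u - fun _ => c) (u - fun _ => c) = rf.E u u := by
  have h : (u - fun _ => c) = u + fun _ => -c := by ext; simp [sub_eq_add_neg]
  rw [h, rf.E_add_const hu]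

noncomputable def energyNorm (u : X → ℝ) : ℝ := √(rf.E u u)

lemma energyNorm_nonneg (u : X → ℝ) : 0 ≤ rf.energyNorm u := Real.sqrt_nonneg _

lemma sq_energyNorm {u : X → ℝ} (hu : u ∈ rf.F) : rf.energyNorm u ^ 2 = rf.E u u :=
  Real.sq_sqrt (rf.nonneg u hu)

lemma energyNorm_le_iff {u : X → ℝ} {b : ℝ} (hb : 0 ≤ b) : rf.energyNorm u ≤ b ↔ rf.E u u ≤ b ^ 2 :=
  Real.sqrt_le_left hb

lemma energyNorm_sub_comm {u v : X → ℝ} (hu : u ∈ rf.F) (hv : v ∈ rf.F) :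
    rf.energyNorm (u - v) = rf.energyNorm (v - u) := by
  rw [energyNorm, energyNorm, ← neg_sub, ← neg_one_smul ℝ (v - u),
    rf.E_smul_smul _ (rf.sub_mem hv hu)]
  norm_num

lemma energyNorm_add_le {u v : X → ℝ} (hu : u ∈ rf.F) (hv : v ∈ rf.F) :
    rf.energyNorm (u + v) ≤ rf.energyNorm u + rf.energyNorm v := by
  rw [rf.energyNorm_le_iff (add_nonneg (rf.energyNorm_nonneg u) (rf.energyNorm_nonneg v)),
    rf.E_add_add hu hv, add_sq, rf.sq_energyNorm hu, rf.sq_energyNorm hv]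
  have hcs : rf.E u v ≤ rf.energyNorm u * rf.energyNorm v := by
    rw [energyNorm, energyNorm, ← Real.sqrt_mul (rf.nonneg u hu)]
    exact Real.le_sqrt_of_sq_le (rf.E_sq_le_mul hu hv)
  linarith

lemma energyNorm_sum_le {ι : Type*} {s : Finset ι} {f : ι → X → ℝ} (h : ∀ i ∈ s, f i ∈ rf.F) :
    rf.energyNorm (∑ i ∈ s, f i) ≤ ∑ i ∈ s, rf.energyNorm (f i) := by
  classical
  induction s using Finset.induction with
  | empty => simp [energyNorm, rf.E_zero]
  | insert a s ha ih =>
    have hs : ∀ i ∈ s, f i ∈ rf.F := fun i hi => h i (Finset.mem_insert_of_mem hi)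
    rw [Finset.sum_insert ha, Finset.sum_insert ha]
    exact (rf.energyNorm_add_le (h a (s.mem_insert_self a)) (rf.sum_mem hs)).trans
      (add_le_add le_rfl (ih hs))

lemma energyNorm_sum_le_card_mul {ι : Type*} {s : Finset ι} {f : ι → X → ℝ} {b : ℝ}
    (h : ∀ i ∈ s, f i ∈ rf.F) (hb : ∀ i ∈ s, rf.energyNorm (f i) ≤ b) :
    rf.energyNorm (∑ i ∈ s, f i) ≤ s.card * b :=
  (rf.energyNorm_sum_le h).trans (by simpa using Finset.sum_le_card_nsmul s _ b hb)

def unitTrunc (u : X → ℝ) : X → ℝ := fun x => max 0 (min 1 (u x))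

lemma unitTrunc_mem {u : X → ℝ} (hu : u ∈ rf.F) : unitTrunc u ∈ rf.F := (rf.markov u hu).1

lemma E_unitTrunc_le {u : X → ℝ} (hu : u ∈ rf.F) :
    rf.E (unitTrunc u) (unitTrunc u) ≤ rf.E u u := (rf.markov u hu).2

lemma unitTrunc_nonneg (u : X → ℝ) (x : X) : 0 ≤ unitTrunc u x := le_max_left _ _

lemma unitTrunc_eq_one {u : X → ℝ} {x : X} (h : 1 ≤ u x) : unitTrunc u x = 1 := by
  simp [unitTrunc, h]

lemma unitTrunc_eq_zero {u : X → ℝ} {x : X} (h : u x ≤ 0) : unitTrunc u x = 0 := by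
  simp [unitTrunc, h, h.trans zero_le_one]

lemma E_unitTrunc_sum_le {ι : Type*} {s : Finset ι} {w : ι → X → ℝ} {e : ℝ} (he : 0 ≤ e)
    (hw : ∀ i ∈ s, w i ∈ rf.F) (hE : ∀ i ∈ s, rf.E (w i) (w i) ≤ e) :
    rf.E (unitTrunc (∑ i ∈ s, w i)) (unitTrunc (∑ i ∈ s, w i)) ≤ s.card ^ 2 * e := by
  have h := rf.energyNorm_sum_le_card_mul hw fun i hi =>
    (rf.energyNorm_le_iff (Real.sqrt_nonneg e)).2 ((hE i hi).trans_eq (Real.sq_sqrt he).symm)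
  rw [rf.energyNorm_le_iff (by positivity), mul_pow, Real.sq_sqrt he] at h
  exact (rf.E_unitTrunc_le (rf.sum_mem hw)).trans h

lemma exists_tendsto_energyNorm_sub {S : ℕ → X → ℝ} (hS : ∀ n, S n ∈ rf.F)
    (hcauchy : ∀ ε > 0, ∃ N, ∀ m ≥ N, ∀ n ≥ N, rf.energyNorm (S m - S n) < ε) :
    ∃ v ∈ rf.F, Tendsto (fun n => rf.energyNorm (v - S n)) atTop (𝓝 0) := by
  obtain ⟨v, hv, hlim⟩ := rf.complete S hS fun ε hε => by
    obtain ⟨N, hN⟩ := hcauchy (√ε) (Real.sqrt_pos.2 hε)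
    exact ⟨N, fun m hm n hn => (Real.sqrt_lt_sqrt_iff (rf.nonneg _ (rf.sub_mem (hS m) (hS n)))).1
      (hN m hm n hn)⟩
  refine ⟨v, hv, Metric.tendsto_atTop.2 fun ε hε => ?_⟩
  obtain ⟨N, hN⟩ := hlim (ε ^ 2) (by positivity)
  refine ⟨N, fun n hn => ?_⟩
  rw [Real.dist_eq, sub_zero, abs_of_nonneg (rf.energyNorm_nonneg _)]
  exact (Real.sqrt_lt' hε).2 (hN n hn)

lemma rmetric_of_ne {p q : X} (h : p ≠ q) :
    rf.rmetric p q = (sInf {e : ℝ | ∃ u ∈ rf.F, u p = 1 ∧ u q = 0 ∧ rf.E u u = e})⁻¹ :=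
  if_neg h

lemma rmetric_pos {p q : X} (h : p ≠ q) : 0 < rf.rmetric p q := by
  rw [rf.rmetric_of_ne h]
  exact inv_pos.2 (rf.inf_pos p q h)

lemma rmetric_nonneg (p q : X) : 0 ≤ rf.rmetric p q := by
  rcases eq_or_ne p q with rfl | h
  · exact (if_pos rfl).ge
  · exact (rf.rmetric_pos h).le

lemma inv_rmetric_le_E {u : X → ℝ} (hu : u ∈ rf.F) {p q : X} (hp : u p = 1) (hq : u q = 0) :
    (rf.rmetric p q)⁻¹ ≤ rf.E u u := by
  have hpq : p ≠ q := by rintro rfl; simp [hp] at hq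
  rw [rf.rmetric_of_ne hpq, inv_inv]
  refine csInf_le ⟨0, ?_⟩ ⟨u, hu, hp, hq, rfl⟩
  rintro _ ⟨w, hw, -, -, rfl⟩
  exact rf.nonneg w hw

lemma sq_sub_le_rmetric_mul_E {u : X → ℝ} (hu : u ∈ rf.F) (p q : X) :
    (u p - u q) ^ 2 ≤ rf.rmetric p q * rf.E u u := by
  rcases eq_or_ne (u p) (u q) with h | h
  · rw [h, sub_self, sq, zero_mul]
    exact mul_nonneg (rf.rmetric_nonneg p q) (rf.nonneg u hu)
  have ha : 0 < (u p - u q) ^ 2 := by positivity [sub_ne_zero.2 h]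
  have hR : 0 < rf.rmetric p q := rf.rmetric_pos fun e => h (congrArg u e)
  have hw := rf.smul_mem (u p - u q)⁻¹ (rf.sub_mem hu (rf.const_mem (u q)))
  have hle := rf.inv_rmetric_le_E hw (p := p) (q := q)
    (by simp [inv_mul_cancel₀ (sub_ne_zero.2 h)]) (by simp)
  rw [rf.E_smul_smul _ (rf.sub_mem hu (rf.const_mem _)), rf.E_sub_const hu, inv_pow,
    ← div_eq_inv_mul, le_div_iff₀ ha] at hle
  exact (inv_mul_le_iff₀ hR).1 hle

lemma abs_sub_le_sqrt_rmetric_mul_energyNorm {u : X → ℝ} (hu : u ∈ rf.F) (p q : X) :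
    |u p - u q| ≤ √(rf.rmetric p q) * rf.energyNorm u := by
  rw [energyNorm, ← Real.sqrt_mul (rf.rmetric_nonneg p q)]
  exact Real.abs_le_sqrt (rf.sq_sub_le_rmetric_mul_E hu p q)

lemma exists_nonneg_E_le_two_div_rmetric {p q : X} (h : p ≠ q) :
    ∃ u ∈ rf.F, (∀ x, 0 ≤ u x) ∧ u p = 1 ∧ u q = 0 ∧ rf.E u u ≤ 2 / rf.rmetric p q := by
  set S := {e : ℝ | ∃ u ∈ rf.F, u p = 1 ∧ u q = 0 ∧ rf.E u u = e}
  have hS : S.Nonempty :=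
    let ⟨u, hu, hp, hq⟩ := rf.exists_unit p q h
    ⟨_, u, hu, hp, hq, rfl⟩
  have hpos : 0 < sInf S := rf.inf_pos p q h
  obtain ⟨_, ⟨u, hu, hp, hq, rfl⟩, hlt⟩ :=
    exists_lt_of_csInf_lt hS (by linarith : sInf S < 2 * sInf S)
  refine ⟨unitTrunc u, rf.unitTrunc_mem hu, unitTrunc_nonneg u, unitTrunc_eq_one hp.ge,
    unitTrunc_eq_zero hq.le, ?_⟩
  rw [rf.rmetric_of_ne h, div_inv_eq_mul]
  exact (rf.E_unitTrunc_le hu).trans hlt.le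

lemma exists_tendsto_sum {f : ℕ → X → ℝ} (hf : ∀ k, f k ∈ rf.F) {z : X} (hz : ∀ k, f k z = 0)
    (hsum : Summable fun k => rf.energyNorm (f k)) :
    ∃ v ∈ rf.F, v z = 0 ∧ rf.energyNorm v ≤ ∑' k, rf.energyNorm (f k) ∧
      ∀ y, Tendsto (fun n => ∑ k ∈ Finset.range n, f k y) atTop (𝓝 (v y)) := by
  set S : ℕ → X → ℝ := fun n => ∑ k ∈ Finset.range n, f k
  set T : ℕ → ℝ := fun n => ∑ k ∈ Finset.range n, rf.energyNorm (f k)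
  have hS : ∀ n, S n ∈ rf.F := fun n => rf.sum_mem fun k _ => hf k
  have hST : ∀ m n, m ≤ n → rf.energyNorm (S n - S m) ≤ |T m - T n| := by
    intro m n hmn
    rw [abs_sub_comm]
    refine le_trans ?_ (le_abs_self _)
    simp only [S, T, ← Finset.sum_Ico_eq_sub _ hmn]
    exact rf.energyNorm_sum_le fun k _ => hf k
  obtain ⟨v, hv, hlim⟩ := rf.exists_tendsto_energyNorm_sub hS fun ε hε => by
    obtain ⟨N, hN⟩ := Metric.cauchySeq_iff.1 hsum.hasSum.tendsto_sum_nat.cauchySeq ε hε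
    refine ⟨N, fun m hm n hn => ?_⟩
    rcases le_total n m with h | h
    · exact (hST n m h).trans_lt (hN n hn m hm)
    · rw [rf.energyNorm_sub_comm (hS m) (hS n)]
      exact (hST m n h).trans_lt (hN m hm n hn)
  refine ⟨v - fun _ => v z, rf.sub_mem hv (rf.const_mem _), sub_self _, ?_, fun y => ?_⟩
  · have hconst : rf.energyNorm (v - fun _ => v z) = rf.energyNorm v := by
      rw [energyNorm, energyNorm, rf.E_sub_const hv]
    rw [hconst]
    refine ge_of_tendsto' (by simpa using hlim.add_const (∑' k, rf.energyNorm (f k))) fun n => ?_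
    calc rf.energyNorm v = rf.energyNorm ((v - S n) + S n) := by rw [sub_add_cancel]
      _ ≤ rf.energyNorm (v - S n) + rf.energyNorm (S n) :=
        rf.energyNorm_add_le (rf.sub_mem hv (hS n)) (hS n)
      _ ≤ rf.energyNorm (v - S n) + ∑' k, rf.energyNorm (f k) :=
        add_le_add le_rfl ((rf.energyNorm_sum_le fun k _ => hf k).trans
          (hsum.sum_le_tsum _ fun k _ => rf.energyNorm_nonneg _))
  · rw [tendsto_iff_norm_sub_tendsto_zero]
    refine squeeze_zero (fun n => norm_nonneg _) (fun n => ?_)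
      (by simpa using hlim.const_mul √(rf.rmetric y z))
    have hSz : S n z = 0 := by simp [S, hz]
    have := rf.abs_sub_le_sqrt_rmetric_mul_energyNorm (rf.sub_mem hv (hS n)) y z
    rw [Pi.sub_apply, Pi.sub_apply, hSz] at this
    rw [Real.norm_eq_abs, abs_sub_comm]
    convert this using 2
    simp [S]
    ring

lemma ofReal_inv_le_setRes {A B : Set X} {u : X → ℝ} (hu : u ∈ rf.F) (hA : ∀ x ∈ A, u x = 1)
    (hB : ∀ x ∈ B, u x = 0) {e : ℝ} (he : rf.E u u ≤ e) :
    ENNReal.ofReal e⁻¹ ≤ rf.setRes A B := by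
  unfold setRes
  split_ifs with _ hex
  · rcases le_or_gt e 0 with he0 | he0
    · simp [ENNReal.ofReal_of_nonpos (inv_nonpos.2 he0)]
    rw [ENNReal.ofReal_inv_of_pos he0]
    refine ENNReal.inv_le_inv.2 (ENNReal.ofReal_le_ofReal ((csInf_le ⟨0, ?_⟩ ?_).trans he))
    · rintro _ ⟨w, hw, -, -, rfl⟩
      exact rf.nonneg w hw
    · exact ⟨u, hu, hA, hB, rfl⟩
  · exact absurd ⟨u, hu, hA, hB⟩ hex
  · exact le_top

end ResistanceForm

lemma DoublingOf.exists_ball_subset_biUnion {X : Type*} [PseudoMetricSpace X]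
    (h : DoublingOf fun x y : X => dist x y) :
    ∃ N : ℕ, 0 < N ∧ ∀ (m : ℕ) (x : X) (ρ : ℝ), ∃ s : Finset X, s.card ≤ N ^ m ∧
      ball x (2 ^ m * ρ) ⊆ ⋃ c ∈ s, ball c ρ := by
  obtain ⟨N, hN⟩ := h
  have hdouble : ∀ x r, ∃ s : Finset X, s.card ≤ N + 1 ∧ ball x (2 * r) ⊆ ⋃ c ∈ s, ball c r := by
    intro x r
    obtain ⟨s, hs, hcov⟩ := hN x r
    refine ⟨s, hs.trans N.le_succ, fun y hy => ?_⟩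
    simpa [dist_comm] using hcov (show dist x y < 2 * r by simpa [dist_comm] using hy)
  -- `N + 1` rather than `N`, which can be `0` when `X` is empty.
  refine ⟨N + 1, N.succ_pos, fun m => ?_⟩
  induction m with
  | zero => exact fun x ρ => ⟨{x}, by simp, by simp⟩
  | succ m ih =>
    intro x ρ
    choose t ht hcov using ih
    obtain ⟨s, hs, hscov⟩ := hdouble x (2 ^ m * ρ)
    classical
    refine ⟨s.biUnion fun c => t c ρ, ?_, fun y hy => ?_⟩
    · calc (s.biUnion fun c => t c ρ).card ≤ ∑ c ∈ s, (t c ρ).card := Finset.card_biUnion_le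
        _ ≤ s.card * (N + 1) ^ m := by simpa using Finset.sum_le_card_nsmul s _ _ fun c _ => ht c ρ
        _ ≤ (N + 1) ^ (m + 1) := by rw [pow_succ']; gcongr
    · rw [pow_succ', mul_assoc] at hy
      obtain ⟨c, hc, hyc⟩ := mem_iUnion₂.1 (hscov hy)
      obtain ⟨c', hc', hyc'⟩ := mem_iUnion₂.1 (hcov c ρ hyc)
      exact mem_iUnion₂.2 ⟨c', Finset.mem_biUnion.2 ⟨c, hc, hc'⟩, hyc'⟩

lemma exists_mul_four_pow_le_lt {a d : ℝ} (ha : 0 < a) (h : a ≤ d) :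
    ∃ k : ℕ, a * 4 ^ k ≤ d ∧ d < 4 * (a * 4 ^ k) := by
  obtain ⟨k, hk₁, hk₂⟩ := exists_nat_pow_near ((one_le_div ha).2 h) (by norm_num : (1 : ℝ) < 4)
  rw [le_div_iff₀ ha] at hk₁
  rw [div_lt_iff₀ ha, pow_succ] at hk₂
  exact ⟨k, by linarith, by linarith⟩

namespace ResistanceForm

variable {X : Type*} [MetricSpace X] (rf : ResistanceForm X)

lemma exists_bump (hR : ∀ x y : X, dist x y = rf.rmetric x y) {z c : X} {s : ℝ} (hs : 0 < s)
    (hzc : s / 2 ≤ dist z c) :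
    ∃ θ ∈ rf.F, (∀ y, 0 ≤ θ y) ∧ θ z = 0 ∧ rf.E θ θ ≤ 4 / s ∧
      ∀ y ∈ ball c (s / 16), 1 / 2 ≤ θ y := by
  have hcz : c ≠ z := by
    rintro rfl
    rw [dist_self] at hzc
    linarith
  obtain ⟨θ, hθ, h0, hc, hz, hE⟩ := rf.exists_nonneg_E_le_two_div_rmetric hcz
  have hE' : rf.E θ θ ≤ 4 / s :=
    calc rf.E θ θ ≤ 2 / rf.rmetric c z := hE
      _ = 4 / (2 * dist z c) := by rw [← hR, dist_comm]; ring
      _ ≤ 4 / s := by gcongr; linarith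
  refine ⟨θ, hθ, h0, hz, hE', fun y hy => ?_⟩
  have h := rf.sq_sub_le_rmetric_mul_E hθ y c
  rw [hc, ← hR] at h
  have : (θ y - 1) ^ 2 ≤ 1 / 4 :=
    calc (θ y - 1) ^ 2 ≤ dist y c * rf.E θ θ := h
      _ ≤ s / 16 * (4 / s) := by gcongr; exacts [rf.nonneg θ hθ, (mem_ball.1 hy).le]
      _ = 1 / 4 := by field_simp; norm_num
  nlinarith

lemma exists_shell_function (hR : ∀ x y : X, dist x y = rf.rmetric x y) {z : X} {s : ℝ}
    (hs : 0 < s) (P : Finset X) (hP : ball z (4 * s) ⊆ ⋃ c ∈ P, ball c (s / 16)) :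
    ∃ g ∈ rf.F, (∀ y, 0 ≤ g y) ∧ g z = 0 ∧ rf.energyNorm g ≤ P.card * (2 / √s) ∧
      ∀ y, s ≤ dist z y → dist z y < 4 * s → 1 / 2 ≤ g y := by
  have hbump : ∀ c, ∃ θ ∈ rf.F, (∀ y, 0 ≤ θ y) ∧ θ z = 0 ∧ rf.E θ θ ≤ 4 / s ∧
      (s / 2 ≤ dist z c → ∀ y ∈ ball c (s / 16), 1 / 2 ≤ θ y) := by
    intro c
    by_cases hc : s / 2 ≤ dist z c
    · obtain ⟨θ, hθ, h0, hz, hE, hhalf⟩ := rf.exists_bump hR hs hc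
      exact ⟨θ, hθ, h0, hz, hE, fun _ => hhalf⟩
    · exact ⟨0, rf.zero_mem, fun _ => le_rfl, rfl, by rw [rf.E_zero]; positivity,
        fun h => absurd h hc⟩
  choose θ hθ h0 hz hE hhalf using hbump
  refine ⟨∑ c ∈ P, θ c, rf.sum_mem fun c _ => hθ c, fun y => ?_, by simp [hz], ?_,
    fun y hy₁ hy₂ => ?_⟩
  · simpa using Finset.sum_nonneg fun c _ => h0 c y
  · refine rf.energyNorm_sum_le_card_mul (fun c _ => hθ c) fun c _ => ?_
    rw [energyNorm_le_iff _ (by positivity), div_pow, Real.sq_sqrt hs.le]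
    linarith [hE c]
  · obtain ⟨c, hc, hyc⟩ := mem_iUnion₂.1 (hP (mem_ball'.2 hy₂))
    have hzc : s / 2 ≤ dist z c := by
      linarith [dist_triangle z c y, mem_ball'.1 hyc]
    calc 1 / 2 ≤ θ c y := hhalf c hzc y hyc
      _ ≤ ∑ c ∈ P, θ c y := Finset.single_le_sum (fun c _ => h0 c y) hc
      _ = (∑ c ∈ P, θ c) y := by simp

lemma exists_dyadic_shell_function (hR : ∀ x y : X, dist x y = rf.rmetric x y) {N : ℕ}
    (hcov : ∀ (x : X) (ρ : ℝ), ∃ s : Finset X, s.card ≤ N ^ 6 ∧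
      ball x (2 ^ 6 * ρ) ⊆ ⋃ c ∈ s, ball c ρ)
    (z : X) {a : ℝ} (ha : 0 < a) (k : ℕ) :
    ∃ g ∈ rf.F, (∀ y, 0 ≤ g y) ∧ g z = 0 ∧ rf.energyNorm g ≤ 2 * N ^ 6 / √a * (1 / 2) ^ k ∧
      ∀ y, a * 4 ^ k ≤ dist z y → dist z y < 4 * (a * 4 ^ k) → 1 / 2 ≤ g y := by
  obtain ⟨P, hPcard, hP⟩ := hcov z (a * 4 ^ k / 16)
  obtain ⟨g, hg, h0, hz, hnorm, hhalf⟩ := rf.exists_shell_function hR (s := a * 4 ^ k)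
    (by positivity) P (by convert hP using 2; ring)
  refine ⟨g, hg, h0, hz, hnorm.trans ?_, hhalf⟩
  have h4 : (4 : ℝ) ^ k = (2 ^ k) ^ 2 := by rw [← pow_mul, mul_comm, pow_mul]; norm_num
  have hsqrt : √(a * 4 ^ k) = √a * 2 ^ k := by
    rw [Real.sqrt_mul ha.le, h4, Real.sqrt_sq (by positivity)]
  calc (P.card : ℝ) * (2 / √(a * 4 ^ k)) ≤ N ^ 6 * (2 / √(a * 4 ^ k)) := by
        gcongr
        exact_mod_cast hPcard
    _ = 2 * N ^ 6 / √a * (1 / 2) ^ k := by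
        rw [hsqrt, one_div, inv_pow]
        field_simp

lemma exists_potential (hR : ∀ x y : X, dist x y = rf.rmetric x y)
    (hdb : DoublingOf fun x y : X => dist x y) :
    ∃ Λ : ℕ, ∀ (z : X) (ρ : ℝ), 0 < ρ → ∃ V ∈ rf.F, V z = 0 ∧ rf.E V V ≤ 1 / (16 * ρ) ∧
      ∀ y, Λ * ρ ≤ dist z y → 1 / 2 ≤ V y := by
  obtain ⟨N, hN, hcov⟩ := hdb.exists_ball_subset_biUnion
  -- `Λ = 256 (N ^ 6) ^ 2` makes the energy bound `(2 D) ^ 2` of `V` equal to `1 / (16 ρ)`.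
  refine ⟨256 * N ^ 12, fun z ρ hρ => ?_⟩
  set a : ℝ := 256 * N ^ 12 * ρ
  have ha : 0 < a := by positivity
  set D : ℝ := 2 * N ^ 6 / √a
  choose g hg h0 hz hnorm hhalf using rf.exists_dyadic_shell_function hR (hcov 6) z ha
  have hgeom : Summable fun k : ℕ => D * (1 / 2 : ℝ) ^ k := summable_geometric_two.mul_left _
  have hsum : Summable fun k => rf.energyNorm (g k) :=
    .of_nonneg_of_le (fun k => rf.energyNorm_nonneg _) hnorm hgeom
  obtain ⟨V, hV, hVz, hVnorm, hlim⟩ := rf.exists_tendsto_sum hg hz hsum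
  refine ⟨V, hV, hVz, ?_, fun y hy => ?_⟩
  · have : rf.energyNorm V ≤ 2 * D :=
      calc rf.energyNorm V ≤ ∑' k, D * (1 / 2 : ℝ) ^ k :=
            hVnorm.trans (hsum.tsum_le_tsum hnorm hgeom)
        _ = 2 * D := by rw [tsum_mul_left, tsum_geometric_two, mul_comm]
    rw [energyNorm_le_iff _ (by positivity), mul_pow, div_pow, Real.sq_sqrt ha.le] at this
    exact this.trans_eq (by simp only [a]; field_simp; norm_num)
  · obtain ⟨k, hk₁, hk₂⟩ := exists_mul_four_pow_le_lt ha (by simpa [a] using hy)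
    refine ge_of_tendsto (hlim y) (eventually_atTop.2 ⟨k + 1, fun n hn => ?_⟩)
    calc 1 / 2 ≤ g k y := hhalf k y hk₁ hk₂
      _ ≤ ∑ j ∈ Finset.range n, g j y :=
        Finset.single_le_sum (fun j _ => h0 j y) (Finset.mem_range.2 hn)

lemma exists_cutoff (hR : ∀ x y : X, dist x y = rf.rmetric x y)
    (hdb : DoublingOf fun x y : X => dist x y) :
    ∃ Λ : ℕ, ∀ (z : X) (ρ : ℝ), 0 < ρ → ∃ w ∈ rf.F, (∀ y, 0 ≤ w y) ∧ rf.E w w ≤ 1 / ρ ∧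
      (∀ y ∈ closedBall z ρ, w y = 1) ∧ ∀ y, Λ * ρ ≤ dist z y → w y = 0 := by
  obtain ⟨Λ, hpot⟩ := rf.exists_potential hR hdb
  refine ⟨Λ, fun z ρ hρ => ?_⟩
  obtain ⟨V, hV, hVz, hVE, hVfar⟩ := hpot z ρ hρ
  have hV' : (-4 : ℝ) • V ∈ rf.F := rf.smul_mem _ hV
  refine ⟨unitTrunc ((-4 : ℝ) • V + fun _ => 2), rf.unitTrunc_mem (rf.add_mem hV' (rf.const_mem 2)),
    unitTrunc_nonneg _, ?_, fun y hy => unitTrunc_eq_one ?_,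
    fun y hy => unitTrunc_eq_zero ?_⟩
  · refine (rf.E_unitTrunc_le (rf.add_mem hV' (rf.const_mem 2))).trans ?_
    rw [rf.E_add_const hV', rf.E_smul_smul _ hV]
    calc (-4 : ℝ) ^ 2 * rf.E V V ≤ (-4) ^ 2 * (1 / (16 * ρ)) := by gcongr
      _ = 1 / ρ := by field_simp; norm_num
  · have h := rf.sq_sub_le_rmetric_mul_E hV y z
    rw [hVz, sub_zero, ← hR] at h
    have : V y ^ 2 ≤ (1 / 4) ^ 2 :=
      calc V y ^ 2 ≤ dist y z * rf.E V V := h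
        _ ≤ ρ * (1 / (16 * ρ)) := by gcongr; exacts [rf.nonneg V hV, mem_closedBall.1 hy]
        _ = (1 / 4) ^ 2 := by field_simp; norm_num
    simp only [Pi.add_apply, Pi.smul_apply, smul_eq_mul]
    linarith [(abs_le.1 (abs_le_of_sq_le_sq this (by norm_num))).2]
  · simp only [Pi.add_apply, Pi.smul_apply, smul_eq_mul]
    linarith [hVfar y hy]

lemma exists_cutoff_ball (hR : ∀ x y : X, dist x y = rf.rmetric x y)
    (hdb : DoublingOf fun x y : X => dist x y) :
    ∃ K : ℝ, 0 < K ∧ ∀ (x : X) (r : ℝ), 0 < r → ∃ u ∈ rf.F, (∀ y ∈ closedBall x r, u y = 1) ∧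
      (∀ y ∉ ball x (2 * r), u y = 0) ∧ rf.E u u ≤ K / r := by
  obtain ⟨Λ, hcut⟩ := rf.exists_cutoff hR hdb
  obtain ⟨N, hN, hcov⟩ := hdb.exists_ball_subset_biUnion
  refine ⟨((N : ℝ) ^ (Λ + 2)) ^ 2 * 2 ^ (Λ + 1), by positivity, fun x r hr => ?_⟩
  -- `(Λ + 1) ρ ≤ r` keeps the cutoffs of the balls meeting `B̄(x, r)` inside `B(x, 2 r)`, and
  -- `B(x, 2 r) = B(x, 2 ^ (Λ + 2) ρ)` is covered by `N ^ (Λ + 2)` balls of radius `ρ`.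
  set ρ := r / 2 ^ (Λ + 1)
  have hρ : 0 < ρ := by positivity
  have hΛρ : (Λ + 1) * ρ ≤ r := by
    rw [← le_div_iff₀ hρ, div_div_cancel₀ hr.ne']
    exact_mod_cast (Nat.lt_two_pow_self (n := Λ + 1)).le
  have hlocal : ∀ c, ∃ w ∈ rf.F, (∀ y, 0 ≤ w y) ∧ rf.E w w ≤ 1 / ρ ∧
      (dist x c ≤ r + ρ → ∀ y ∈ closedBall c ρ, w y = 1) ∧ ∀ y ∉ ball x (2 * r), w y = 0 := by
    intro c
    by_cases hc : dist x c ≤ r + ρ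
    · obtain ⟨w, hw, h0, hE, h1, hfar⟩ := hcut c ρ hρ
      refine ⟨w, hw, h0, hE, fun _ => h1, fun y hy => hfar y ?_⟩
      rw [mem_ball', not_lt] at hy
      linarith [dist_triangle x c y]
    · exact ⟨0, rf.zero_mem, fun _ => le_rfl, by rw [rf.E_zero]; positivity,
        fun h => absurd h hc, fun _ _ => rfl⟩
  choose w hw h0 hE h1 hfar using hlocal
  obtain ⟨Q, hQ, hQcov⟩ := hcov (Λ + 2) x ρ
  have hsum : ∑ c ∈ Q, w c ∈ rf.F := rf.sum_mem fun c _ => hw c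
  refine ⟨unitTrunc (∑ c ∈ Q, w c), rf.unitTrunc_mem hsum, fun y hy => unitTrunc_eq_one ?_,
    fun y hy => unitTrunc_eq_zero (by simp [hfar _ y hy]), ?_⟩
  · have hy' : y ∈ ball x (2 ^ (Λ + 2) * ρ) := by
      rw [mem_ball', show (2 : ℝ) ^ (Λ + 2) * ρ = 2 * r by simp only [ρ]; field_simp; ring]
      linarith [mem_closedBall'.1 hy]
    obtain ⟨c, hc, hyc⟩ := mem_iUnion₂.1 (hQcov hy')
    have hxc : dist x c ≤ r + ρ := by
      linarith [dist_triangle x y c, mem_closedBall'.1 hy, mem_ball.1 hyc]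
    calc 1 = w c y := (h1 c hxc y (mem_closedBall.2 (mem_ball.1 hyc).le)).symm
      _ ≤ ∑ c ∈ Q, w c y := Finset.single_le_sum (fun c _ => h0 c y) hc
      _ = (∑ c ∈ Q, w c) y := by simp
  · refine (rf.E_unitTrunc_sum_le (by positivity) (fun c _ => hw c) fun c _ => hE c).trans ?_
    calc (Q.card : ℝ) ^ 2 * (1 / ρ) ≤ ((N : ℝ) ^ (Λ + 2)) ^ 2 * (1 / ρ) := by
          gcongr
          exact_mod_cast hQ
      _ = ((N : ℝ) ^ (Λ + 2)) ^ 2 * 2 ^ (Λ + 1) / r := by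
          simp only [ρ]
          field_simp

end ResistanceForm

theorem setRes_closure_ball_lower_general {X : Type*} [MetricSpace X]
    (rf : ResistanceForm X) (hR : ∀ x y : X, dist x y = rf.rmetric x y)
    (hdb : DoublingOf fun x y : X => dist x y) :
    ∃ C : ℝ, 0 < C ∧ ∀ (x : X) (r : ℝ), 0 < r →
      ENNReal.ofReal (C * r) ≤
        rf.setRes (closure (Metric.ball x r)) (Metric.ball x (2 * r))ᶜ := by
  obtain ⟨K, hK, hcut⟩ := rf.exists_cutoff_ball hR hdb
  refine ⟨K⁻¹, inv_pos.2 hK, fun x r hr => ?_⟩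
  obtain ⟨u, hu, hu₁, hu₀, hE⟩ := hcut x r hr
  rw [show K⁻¹ * r = (K / r)⁻¹ by rw [inv_div, div_eq_inv_mul]]
  exact rf.ofReal_inv_le_setRes hu (fun y hy => hu₁ y (closure_ball_subset_closedBall hy))
    (fun y hy => hu₀ y hy) hE

/-- If the resistance metric `R` is complete and doubling, then there
is `C > 0` with `𝓡(cl B(x,r), B(x,2r)ᶜ) ≥ C·r` for every `x ∈ X` and `r > 0`. -/
theorem setRes_closure_ball_lower {X : Type*} [MetricSpace X] [CompleteSpace X]
    (rf : ResistanceForm X) (hR : ∀ x y : X, dist x y = rf.rmetric x y)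
    (hdb : DoublingOf fun x y : X => dist x y) :
    ∃ C : ℝ, 0 < C ∧ ∀ (x : X) (r : ℝ), 0 < r →
      ENNReal.ofReal (C * r) ≤
        rf.setRes (closure (Metric.ball x r)) (Metric.ball x (2 * r))ᶜ :=
  setRes_closure_ball_lower_general rf hR hdb
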